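/- Let $1 \to A \to E \xrightarrow{p} \mathbb{Z}^n \to 1$ be a central extension of groups in which $E$ is generated by $A$ together with elements $\dot e_1, \dots, \dot e_n$ lifting the standard basis of $\mathbb{Z}^n$. Suppose there is $N \ge 1$ with $\dot e_j^N \in A$ for all $j$, and suppose every element $a \in A$ satisfying $a^N = 1$ is trivial. Then the $\dot e_i$ pairwise commute, $E$ is abelian, and the extension splits: there is a homomorphic section $s : \mathbb{Z}^n \to E$ of $p$. -/

import Mathlib

/-!
A commutator `c = ⁅ėᵢ, ėⱼ⁆` dies in the abelian group `ℤⁿ`, so it lies in `A` and is central.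
Conjugating by `ėᵢ` then sends `ėⱼᴺ` to `(c ėⱼ)ᴺ = cᴺ ėⱼᴺ`; since `ėⱼᴺ ∈ A` is central, `cᴺ = 1`
and hence `c = 1`. A group generated by pairwise commuting elements is abelian, and pairwise
commuting lifts of the standard basis of the free abelian group `ℤⁿ` define a section.
-/

open scoped commutatorElement

theorem commutatorElement_pow_right_of_commute {G : Type*} [Group G] {x y : G}
    (h : Commute ⁅x, y⁆ y) (n : ℕ) : ⁅x, y ^ n⁆ = ⁅x, y⁆ ^ n := by
  have hconj : x * y * x⁻¹ = ⁅x, y⁆ * y := by rw [commutatorElement_def]; group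
  rw [commutatorElement_def, ← conj_pow, hconj, h.mul_pow, mul_inv_cancel_right]

theorem commute_of_commutatorElement_mem_of_commute_pow {G : Type*} [Group G]
    {A : Subgroup G} (hA : A ≤ Subgroup.center G) {N : ℕ}
    (htor : ∀ a ∈ A, a ^ N = 1 → a = 1) {x y : G} (hxy : ⁅x, y⁆ ∈ A)
    (hy : Commute x (y ^ N)) : Commute x y := by
  have hcentral : Commute ⁅x, y⁆ y := (Subgroup.mem_center_iff.mp (hA hxy) y).symm
  rw [← commutatorElement_eq_one_iff_commute]
  refine htor _ hxy ?_
  rwa [← commutatorElement_pow_right_of_commute hcentral, commutatorElement_eq_one_iff_commute]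

theorem commutatorElement_mem_ker {G H : Type*} [Group G] [CommGroup H] (f : G →* H) (x y : G) :
    ⁅x, y⁆ ∈ f.ker := by
  rw [MonoidHom.mem_ker, map_commutatorElement, commutatorElement_eq_one_iff_commute]
  exact Commute.all _ _

theorem mul_comm_of_closure_eq_top {G : Type*} [Group G] {k : Set G}
    (hk : Subgroup.closure k = ⊤) (hcomm : ∀ x ∈ k, ∀ y ∈ k, x * y = y * x) (x y : G) :
    x * y = y * x :=
  have := Subgroup.isMulCommutative_closure hcomm
  setLike_mul_comm (s := Subgroup.closure k) (hk ▸ Subgroup.mem_top x) (hk ▸ Subgroup.mem_top y)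

theorem exists_monoidHom_multiplicative_pi_int {ι G : Type*} [Fintype ι] [DecidableEq ι] [Group G]
    (g : ι → G) (hg : ∀ i j, Commute (g i) (g j)) :
    ∃ s : Multiplicative (ι → ℤ) →* G, ∀ i, s (Multiplicative.ofAdd (Pi.single i 1)) = g i := by
  have hcomm : Pairwise fun i j => ∀ m k : Multiplicative ℤ,
      Commute (zpowersHom G (g i) m) (zpowersHom G (g j) k) :=
    fun i j _ m k => (hg i j).zpow_zpow _ _
  refine ⟨(MonoidHom.noncommPiCoprod _ hcomm).comp (MulEquiv.funMultiplicative ι ℤ).toMonoidHom,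
    fun i => ?_⟩
  have hsingle : MulEquiv.funMultiplicative ι ℤ (Multiplicative.ofAdd (Pi.single i 1)) =
      Pi.mulSingle i (Multiplicative.ofAdd 1) := by
    funext j
    rcases eq_or_ne j i with rfl | hji <;> simp [*]
  simp [hsingle]

theorem central_extension_of_Zn_splits_general
    (n : ℕ) (E : Type*) [Group E]
    (A : Subgroup E) (hA : A ≤ Subgroup.center E)
    (p : E →* Multiplicative (Fin n → ℤ))
    (hker : p.ker = A)
    (edot : Fin n → E)
    (hlift : ∀ i, p (edot i) = Multiplicative.ofAdd (Pi.single i 1))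
    (hgen : Subgroup.closure ((A : Set E) ∪ Set.range edot) = ⊤)
    (N : ℕ)
    (hpow : ∀ j, (edot j) ^ N ∈ A)
    (htor : ∀ a ∈ A, a ^ N = 1 → a = 1) :
    (∀ i j, Commute (edot i) (edot j)) ∧
    (∀ x y : E, x * y = y * x) ∧
    ∃ s : Multiplicative (Fin n → ℤ) →* E,
      ∀ v, p (s v) = v := by
  have hcomm : ∀ i j, Commute (edot i) (edot j) := fun i j =>
    commute_of_commutatorElement_mem_of_commute_pow hA htor
      (hker ▸ commutatorElement_mem_ker p _ _) (Subgroup.mem_center_iff.mp (hA (hpow j)) _)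
  have habel : ∀ x y : E, x * y = y * x := by
    refine mul_comm_of_closure_eq_top hgen ?_
    rintro x (hx | ⟨i, rfl⟩) y (hy | ⟨j, rfl⟩)
    · exact (Subgroup.mem_center_iff.mp (hA hx) y).symm
    · exact (Subgroup.mem_center_iff.mp (hA hx) _).symm
    · exact Subgroup.mem_center_iff.mp (hA hy) _
    · exact hcomm i j
  obtain ⟨s, hs⟩ := exists_monoidHom_multiplicative_pi_int edot hcomm
  have hsection : p.comp s = MonoidHom.id _ := by
    ext i
    simp [hs, hlift]
  exact ⟨hcomm, habel, s, DFunLike.congr_fun hsection⟩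

/-- **Central extensions of `ℤⁿ` with uniquely `N`-divisible obstruction.**
Let `1 → A → E → ℤⁿ → 1` be a central extension in which `E` is generated
by `A` together with lifts `edot₁, …, edotₙ` of the standard basis.  If there is
`N ≥ 1` with `edotⱼᴺ ∈ A` for all `j` and every `a ∈ A` with `aᴺ = 1` is
trivial, then the `edotᵢ` pairwise commute, `E` is abelian, and the extension
splits: there is a homomorphic section `s : ℤⁿ → E` of `p`. -/
theorem central_extension_of_Zn_splits
    (n : ℕ) (E : Type*) [Group E]
    (A : Subgroup E) (hA : A ≤ Subgroup.center E)
    (p : E →* Multiplicative (Fin n → ℤ))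
    (hker : p.ker = A) (hsurj : Function.Surjective p)
    (edot : Fin n → E)
    (hlift : ∀ i, p (edot i) = Multiplicative.ofAdd (Pi.single i 1))
    (hgen : Subgroup.closure ((A : Set E) ∪ Set.range edot) = ⊤)
    (N : ℕ) (hN : 1 ≤ N)
    (hpow : ∀ j, (edot j) ^ N ∈ A)
    (htor : ∀ a ∈ A, a ^ N = 1 → a = 1) :
    (∀ i j, Commute (edot i) (edot j)) ∧
    (∀ x y : E, x * y = y * x) ∧
    ∃ s : Multiplicative (Fin n → ℤ) →* E,
      ∀ v, p (s v) = v :=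
  central_extension_of_Zn_splits_general n E A hA p hker edot hlift hgen N hpow htor
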